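/- For an n×n real matrix A, there exists a symmetric positive definite matrix P with PA + AᵀP negative definite if and only if every eigenvalue of A has strictly negative real part. -/

import Mathlib

open Matrix Filter

section LyapunovAux

variable {n : ℕ}

lemma mem_spectrum_iff_eig (M : Matrix (Fin n) (Fin n) ℂ) (μ : ℂ) :
    μ ∈ spectrum ℂ M ↔ ∃ v, v ≠ 0 ∧ M.mulVec v = μ • v := by
  rw [spectrum.mem_iff, Matrix.isUnit_iff_isUnit_det, isUnit_iff_ne_zero, not_ne_iff,
    ← Matrix.exists_mulVec_eq_zero_iff]
  have key : ∀ v, (algebraMap ℂ (Matrix (Fin n) (Fin n) ℂ) μ - M) *ᵥ v = μ • v - M *ᵥ v := by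
    intro v
    rw [Matrix.sub_mulVec, Algebra.algebraMap_eq_smul_one, Matrix.smul_mulVec,
      Matrix.one_mulVec]
  constructor
  · rintro ⟨v, hv, hv0⟩
    exact ⟨v, hv, by rw [key v, sub_eq_zero] at hv0; exact hv0.symm⟩
  · rintro ⟨v, hv, hv0⟩
    exact ⟨v, hv, by rw [key v, sub_eq_zero, hv0]⟩

lemma dotProduct_mulVec_symm (S : Matrix (Fin n) (Fin n) ℝ) (hS : Sᵀ = S)
    (a b : Fin n → ℝ) : a ⬝ᵥ S *ᵥ b = b ⬝ᵥ S *ᵥ a := by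
  conv_lhs => rw [Matrix.dotProduct_mulVec, ← hS, Matrix.vecMul_transpose]
  rw [dotProduct_comm]

lemma star_dotProduct_map (S : Matrix (Fin n) (Fin n) ℝ) (hS : Sᵀ = S) (v : Fin n → ℂ) :
    star v ⬝ᵥ (S.map Complex.ofReal) *ᵥ v =
      (((fun i => (v i).re) ⬝ᵥ S *ᵥ (fun i => (v i).re)
       + (fun i => (v i).im) ⬝ᵥ S *ᵥ (fun i => (v i).im) : ℝ) : ℂ) := by
  set a : Fin n → ℝ := fun i => (v i).re with ha
  set b : Fin n → ℝ := fun i => (v i).im with hb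
  have hmap : ∀ x y : Fin n → ℝ,
      (Complex.ofReal ∘ x) ⬝ᵥ (S.map Complex.ofReal) *ᵥ (Complex.ofReal ∘ y)
        = ((x ⬝ᵥ S *ᵥ y : ℝ) : ℂ) := by
    intro x y
    simp only [dotProduct, Matrix.mulVec, Matrix.map_apply, Function.comp_apply]
    push_cast
    rfl
  have hv : v = (Complex.ofReal ∘ a) + Complex.I • (Complex.ofReal ∘ b) := by
    funext i
    simp only [Pi.add_apply, Pi.smul_apply, Function.comp_apply, smul_eq_mul]
    rw [mul_comm, ← Complex.re_add_im (v i)]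
  have hstar : star v = (Complex.ofReal ∘ a) - Complex.I • (Complex.ofReal ∘ b) := by
    funext i
    simp only [Pi.star_apply, Pi.sub_apply, Pi.smul_apply, Function.comp_apply, smul_eq_mul]
    rw [show v i = (a i : ℂ) + b i * Complex.I from (Complex.re_add_im (v i)).symm]
    simp [Complex.ext_iff]
  rw [hstar]
  conv_lhs => rw [hv]
  rw [Matrix.mulVec_add, Matrix.mulVec_smul]
  simp only [sub_dotProduct, dotProduct_add, smul_dotProduct,
    dotProduct_smul, smul_eq_mul, hmap, dotProduct_mulVec_symm S hS b a]
  push_cast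
  ring_nf
  rw [Complex.I_sq]
  ring

lemma hurwitz_of_lyapunov (A : Matrix (Fin n) (Fin n) ℝ)
    (P : Matrix (Fin n) (Fin n) ℝ) (hP : P.PosDef)
    (hneg : ∀ x : Fin n → ℝ, x ≠ 0 → x ⬝ᵥ (P * A + Aᵀ * P).mulVec x < 0)
    (μ : ℂ) (hμ : μ ∈ spectrum ℂ (A.map Complex.ofReal)) : μ.re < 0 := by
  obtain ⟨v, hv, heig⟩ := (mem_spectrum_iff_eig _ μ).mp hμ
  set S : Matrix (Fin n) (Fin n) ℝ := P * A + Aᵀ * P with hSdef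
  have hPsymm : Pᵀ = P := by
    have := hP.1
    rwa [Matrix.IsHermitian, Matrix.conjTranspose_eq_transpose_of_trivial] at this
  have hSsymm : Sᵀ = S := by
    rw [hSdef, Matrix.transpose_add, Matrix.transpose_mul, Matrix.transpose_mul,
      Matrix.transpose_transpose, hPsymm]
    abel
  set a : Fin n → ℝ := fun i => (v i).re with ha
  set b : Fin n → ℝ := fun i => (v i).im with hb
  -- star of eigen relation
  have hstar_eig : (A.map Complex.ofReal) *ᵥ (star v) = (starRingEnd ℂ μ) • star v := by
    funext i
    have := congrFun heig i
    simp only [Matrix.mulVec, dotProduct, Matrix.map_apply, Pi.smul_apply,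
      smul_eq_mul] at this ⊢
    calc ∑ j, (A i j : ℂ) * star v j
        = starRingEnd ℂ (∑ j, (A i j : ℂ) * v j) := by
          rw [map_sum]
          refine Finset.sum_congr rfl fun j _ => ?_
          simp [Pi.star_apply, RingHom.map_mul, Complex.conj_ofReal]
    _ = starRingEnd ℂ (μ * v i) := by rw [this]
    _ = starRingEnd ℂ μ * star v i := by simp
  -- key identity
  have key : star v ⬝ᵥ (S.map Complex.ofReal) *ᵥ v
      = (μ + starRingEnd ℂ μ) * (star v ⬝ᵥ (P.map Complex.ofReal) *ᵥ v) := by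
    have hSmap : S.map Complex.ofReal
        = P.map Complex.ofReal * A.map Complex.ofReal
          + (A.map Complex.ofReal)ᵀ * P.map Complex.ofReal := by
      ext i j
      simp only [hSdef, Matrix.map_apply, Matrix.add_apply, Matrix.mul_apply,
        Matrix.transpose_apply]
      push_cast
      ring
    rw [hSmap, Matrix.add_mulVec, dotProduct_add]
    rw [← Matrix.mulVec_mulVec, ← Matrix.mulVec_mulVec, heig, Matrix.mulVec_smul,
      dotProduct_smul]
    have h2 : star v ⬝ᵥ (A.map Complex.ofReal)ᵀ *ᵥ ((P.map Complex.ofReal) *ᵥ v)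
        = starRingEnd ℂ μ * (star v ⬝ᵥ (P.map Complex.ofReal) *ᵥ v) := by
      rw [Matrix.dotProduct_mulVec, Matrix.vecMul_transpose, hstar_eig,
        smul_dotProduct]
      simp [smul_eq_mul]
    rw [h2]
    simp only [smul_eq_mul]
    ring
  -- convert to real
  have habne : a ≠ 0 ∨ b ≠ 0 := by
    by_contra h
    push_neg at h
    apply hv
    funext i
    have h1 := congrFun h.1 i
    have h2 := congrFun h.2 i
    simp only [ha, hb, Pi.zero_apply] at h1 h2
    exact Complex.ext h1 h2
  have hQpos : 0 < a ⬝ᵥ P *ᵥ a + b ⬝ᵥ P *ᵥ b := by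
    have hPa : ∀ x : Fin n → ℝ, 0 ≤ x ⬝ᵥ P *ᵥ x := by
      intro x
      have := hP.posSemidef.dotProduct_mulVec_nonneg x
      simpa using this
    have hPpos : ∀ x : Fin n → ℝ, x ≠ 0 → 0 < x ⬝ᵥ P *ᵥ x := by
      intro x hx
      have := hP.dotProduct_mulVec_pos hx
      simpa using this
    rcases habne with h | h
    · exact add_pos_of_pos_of_nonneg (hPpos a h) (hPa b)
    · exact add_pos_of_nonneg_of_pos (hPa a) (hPpos b h)
  have hSneg : a ⬝ᵥ S *ᵥ a + b ⬝ᵥ S *ᵥ b < 0 := by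
    have hSa : ∀ x : Fin n → ℝ, x ⬝ᵥ S *ᵥ x ≤ 0 := by
      intro x
      rcases eq_or_ne x 0 with rfl | hx
      · simp
      · exact (hneg x hx).le
    rcases habne with h | h
    · have := hneg a h; have := hSa b; linarith
    · have := hneg b h; have := hSa a; linarith
  -- assemble
  have hre : a ⬝ᵥ S *ᵥ a + b ⬝ᵥ S *ᵥ b
      = (2 * μ.re) * (a ⬝ᵥ P *ᵥ a + b ⬝ᵥ P *ᵥ b) := by
    have h1 := star_dotProduct_map S hSsymm v
    have h2 := star_dotProduct_map P hPsymm v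
    rw [h1, h2] at key
    have hμsum : μ + starRingEnd ℂ μ = ((2 * μ.re : ℝ) : ℂ) := by
      rw [Complex.add_conj]
    rw [hμsum, ← Complex.ofReal_mul] at key
    exact_mod_cast key
  nlinarith

lemma det_sub_one_ne_zero (A : Matrix (Fin n) (Fin n) ℝ)
    (H : ∀ μ ∈ spectrum ℂ (A.map Complex.ofReal), μ.re < 0) : (A - 1).det ≠ 0 := by
  have h1 : (1:ℂ) ∉ spectrum ℂ (A.map Complex.ofReal) := fun h => by have := H 1 h; norm_num at this
  rw [spectrum.notMem_iff] at h1
  rw [_root_.map_one, Matrix.isUnit_iff_isUnit_det, isUnit_iff_ne_zero] at h1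
  have hmap : (1 : Matrix (Fin n) (Fin n) ℂ) - A.map Complex.ofReal
      = Complex.ofRealHom.mapMatrix (1 - A) := by
    rw [map_sub, _root_.map_one]
    rfl
  rw [hmap, ← RingHom.map_det] at h1
  have h2 : (1 - A).det ≠ 0 := fun h => h1 (by rw [h]; simp)
  have h3 : A - 1 = -(1 - A) := by abel
  rw [h3, Matrix.det_neg]
  simp only [ne_eq, mul_eq_zero, not_or]
  refine ⟨by positivity, h2⟩

-- Cayley transform spectrum bound
lemma cayley_spectrum_bound (A : Matrix (Fin n) (Fin n) ℝ)
    (H : ∀ μ ∈ spectrum ℂ (A.map Complex.ofReal), μ.re < 0)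
    (μ : ℂ) (hμ : μ ∈ spectrum ℂ (((A + 1) * (A - 1)⁻¹).map Complex.ofReal)) :
    ‖μ‖ < 1 := by
  have hdet := det_sub_one_ne_zero A H
  set M : Matrix (Fin n) (Fin n) ℂ := A.map Complex.ofReal with hM
  have hmm : ∀ X : Matrix (Fin n) (Fin n) ℝ, X.map Complex.ofReal
      = Complex.ofRealHom.mapMatrix X := fun _ => rfl
  have hdetM : (M - 1).det ≠ 0 := by
    have : M - 1 = Complex.ofRealHom.mapMatrix (A - 1) := by
      rw [map_sub, _root_.map_one, hM, hmm]
    rw [this, ← RingHom.map_det]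
    simpa using hdet
  have hMinv : (A - 1)⁻¹.map Complex.ofReal = (M - 1)⁻¹ := by
    have hprod : (M - 1) * (A - 1)⁻¹.map Complex.ofReal = 1 := by
      have : M - 1 = Complex.ofRealHom.mapMatrix (A - 1) := by
        rw [map_sub, _root_.map_one, hM, hmm]
      rw [this, hmm, ← _root_.map_mul, Matrix.mul_nonsing_inv _ (isUnit_iff_ne_zero.mpr hdet),
        _root_.map_one]
    exact (Matrix.inv_eq_right_inv hprod).symm
  have hBmap : ((A + 1) * (A - 1)⁻¹).map Complex.ofReal = (M + 1) * (M - 1)⁻¹ := by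
    rw [hmm, _root_.map_mul]
    rw [show Complex.ofRealHom.mapMatrix (A + 1) = M + 1 by rw [map_add, _root_.map_one, hM, hmm]]
    rw [show (Complex.ofRealHom.mapMatrix ((A - 1)⁻¹) : Matrix (Fin n) (Fin n) ℂ)
        = (M - 1)⁻¹ from hMinv]
  rw [hBmap] at hμ
  obtain ⟨v, hv, heig⟩ := (mem_spectrum_iff_eig _ μ).mp hμ
  set w : Fin n → ℂ := (M - 1)⁻¹ *ᵥ v with hw
  have hvw : v = (M - 1) *ᵥ w := by
    rw [hw, Matrix.mulVec_mulVec, Matrix.mul_nonsing_inv _ (isUnit_iff_ne_zero.mpr hdetM),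
      Matrix.one_mulVec]
  have hwne : w ≠ 0 := by
    intro h
    apply hv
    rw [hvw, h, Matrix.mulVec_zero]
  have heig' : (M + 1) *ᵥ w = μ • ((M - 1) *ᵥ w) := by
    rw [← hvw, hw, Matrix.mulVec_mulVec]
    exact heig
  have hkey : (1 - μ) • (M *ᵥ w) = (-(1 + μ)) • w := by
    rw [Matrix.add_mulVec, Matrix.sub_mulVec, Matrix.one_mulVec, smul_sub] at heig'
    funext i
    have := congrFun heig' i
    simp only [Pi.add_apply, Pi.sub_apply, Pi.smul_apply, smul_eq_mul] at this ⊢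
    linear_combination this
  have hμne : μ ≠ 1 := by
    intro h
    rw [h] at hkey
    simp only [sub_self, zero_smul] at hkey
    have : (-(1 + (1:ℂ))) • w = 0 := hkey.symm
    rw [smul_eq_zero] at this
    rcases this with h' | h'
    · norm_num at h'
    · exact hwne h'
  set lam : ℂ := (1 + μ) / (μ - 1) with hlam
  have hμ1 : μ - 1 ≠ 0 := sub_ne_zero.mpr hμne
  have heigA : M *ᵥ w = lam • w := by
    funext i
    have := congrFun hkey i
    simp only [Pi.smul_apply, smul_eq_mul] at this ⊢
    rw [hlam]
    field_simp
    linear_combination -this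
  have hlamspec : lam ∈ spectrum ℂ M := (mem_spectrum_iff_eig M lam).mpr ⟨w, hwne, heigA⟩
  have hre : lam.re < 0 := H lam hlamspec
  have hlam1 : lam - 1 ≠ 0 := by
    intro h
    have : lam = 1 := by linear_combination h
    rw [this] at hre
    norm_num at hre
  have hμval : μ = (lam + 1) / (lam - 1) := by
    rw [hlam]
    field_simp
    ring
  have hnormpos : (0:ℝ) < ‖lam - 1‖ := norm_pos_iff.mpr hlam1
  rw [hμval, norm_div, div_lt_one hnormpos]
  have hsq : ‖lam + 1‖ ^ 2 < ‖lam - 1‖ ^ 2 := by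
    rw [Complex.sq_norm, Complex.sq_norm,
      Complex.normSq_apply, Complex.normSq_apply]
    simp only [Complex.add_re, Complex.add_im, Complex.sub_re, Complex.sub_im,
      Complex.one_re, Complex.one_im]
    nlinarith [hre]
  nlinarith [norm_nonneg (lam + 1), norm_nonneg (lam - 1), hsq]

attribute [local instance] Matrix.linftyOpNormedRing Matrix.linftyOpNormedAlgebra

lemma pow_norm_geom (B : Matrix (Fin n) (Fin n) ℝ)
    (hs : ∀ μ ∈ spectrum ℂ (B.map Complex.ofReal), ‖μ‖ < 1) :
    ∃ r : ℝ, 0 ≤ r ∧ r < 1 ∧ ∃ N : ℕ, ∀ m ≥ N, ‖B ^ m‖ ≤ r ^ m := by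
  classical
  set Bc : Matrix (Fin n) (Fin n) ℂ := B.map Complex.ofReal with hBc
  have hfin : (spectrum ℂ Bc).Finite := Bc.finite_spectrum
  set s : Finset ℂ := hfin.toFinset with hsdef
  set r' : NNReal := s.sup fun k => ‖k‖₊ with hr'def
  have hr' : r' < 1 := by
    rw [hr'def]
    refine Finset.sup_lt_iff (by norm_num) |>.mpr fun k hk => ?_
    have := hs k (hfin.mem_toFinset.mp hk)
    exact_mod_cast this
  have hsr : spectralRadius ℂ Bc ≤ (r' : ENNReal) := by
    rw [spectralRadius]
    exact iSup₂_le fun k hk => ENNReal.coe_le_coe.mpr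
      (Finset.le_sup (hfin.mem_toFinset.mpr hk))
  obtain ⟨r, hrr', hr1⟩ := exists_between hr'
  have hgel := spectrum.pow_nnnorm_pow_one_div_tendsto_nhds_spectralRadius Bc
  have hev : ∀ᶠ m : ℕ in atTop, (‖Bc ^ m‖₊ : ENNReal) ^ (1 / (m:ℝ)) < (r : ENNReal) :=
    hgel.eventually_lt_const (lt_of_le_of_lt hsr (by exact_mod_cast hrr'))
  obtain ⟨N, hN⟩ := eventually_atTop.mp hev
  have hnn : ∀ m : ℕ, ‖Bc ^ m‖₊ = ‖B ^ m‖₊ := by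
    intro m
    have hpow : Bc ^ m = (B ^ m).map Complex.ofReal := by
      have h0 : ∀ X : Matrix (Fin n) (Fin n) ℝ,
          X.map Complex.ofReal = Complex.ofRealHom.mapMatrix X := fun _ => rfl
      rw [hBc, h0, ← map_pow, h0]
    rw [hpow, Matrix.linfty_opNNNorm_def, Matrix.linfty_opNNNorm_def]
    congr 1
    funext i
    refine Finset.sum_congr rfl fun j _ => ?_
    simp [Matrix.map_apply, Complex.nnnorm_real]
  refine ⟨r, r.coe_nonneg, by exact_mod_cast hr1, max N 1, fun m hm => ?_⟩
  have hm1 : 1 ≤ m := le_trans (le_max_right _ _) hm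
  have hmN : N ≤ m := le_trans (le_max_left _ _) hm
  have hm0 : (m : ℝ) ≠ 0 := Nat.cast_ne_zero.mpr (by omega)
  have hlt := hN m hmN
  have key : (‖Bc ^ m‖₊ : ENNReal) < (r : ENNReal) ^ m :=
    calc (‖Bc ^ m‖₊ : ENNReal)
        = ((‖Bc ^ m‖₊ : ENNReal) ^ (1 / (m:ℝ))) ^ (m:ℝ) := by
          rw [← ENNReal.rpow_mul, one_div, inv_mul_cancel₀ hm0, ENNReal.rpow_one]
      _ < (r : ENNReal) ^ (m:ℝ) := ENNReal.rpow_lt_rpow hlt (by positivity)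
      _ = (r : ENNReal) ^ m := ENNReal.rpow_natCast _ m
  have key2 : ‖B ^ m‖₊ < r ^ m := by
    rw [← hnn]
    exact_mod_cast key
  calc ‖B ^ m‖ = ((‖B ^ m‖₊ : NNReal) : ℝ) := (coe_nnnorm _).symm
    _ ≤ ((r ^ m : NNReal) : ℝ) := by exact_mod_cast key2.le
    _ = (r:ℝ) ^ m := by push_cast; ring

lemma linfty_nnnorm_entry_le (M : Matrix (Fin n) (Fin n) ℝ) (i j : Fin n) :
    ‖M i j‖₊ ≤ ‖M‖₊ := by
  rw [Matrix.linfty_opNNNorm_def]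
  exact le_trans
    (Finset.single_le_sum (f := fun k => ‖M i k‖₊) (fun _ _ => zero_le) (Finset.mem_univ j))
    (Finset.le_sup (f := fun i => ∑ j, ‖M i j‖₊) (Finset.mem_univ i))

lemma linfty_norm_transpose_le (M : Matrix (Fin n) (Fin n) ℝ) :
    ‖Mᵀ‖ ≤ (n : ℝ) * ‖M‖ := by
  have h : ‖Mᵀ‖₊ ≤ (n : NNReal) * ‖M‖₊ := by
    rw [Matrix.linfty_opNNNorm_def]
    refine Finset.sup_le fun i _ => ?_
    calc ∑ j, ‖Mᵀ i j‖₊ ≤ Finset.univ.card • ‖M‖₊ :=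
          Finset.sum_le_card_nsmul _ _ _ fun j _ => linfty_nnnorm_entry_le M j i
      _ = (n : NNReal) * ‖M‖₊ := by
          simp [Finset.card_univ, nsmul_eq_mul]
  calc ‖Mᵀ‖ = ((‖Mᵀ‖₊ : NNReal) : ℝ) := (coe_nnnorm _).symm
    _ ≤ (((n : NNReal) * ‖M‖₊ : NNReal) : ℝ) := by exact_mod_cast h
    _ = (n : ℝ) * ‖M‖ := by push_cast; ring

/-- linear map `M ↦ x ⬝ᵥ M *ᵥ x` -/
def quadLM (x : Fin n → ℝ) : Matrix (Fin n) (Fin n) ℝ →ₗ[ℝ] ℝ where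
  toFun M := x ⬝ᵥ M *ᵥ x
  map_add' M N := by
    show x ⬝ᵥ (M + N) *ᵥ x = x ⬝ᵥ M *ᵥ x + x ⬝ᵥ N *ᵥ x
    rw [Matrix.add_mulVec, dotProduct_add]
  map_smul' c M := by
    show x ⬝ᵥ (c • M) *ᵥ x = c • (x ⬝ᵥ M *ᵥ x)
    rw [Matrix.smul_mulVec, dotProduct_smul]

/-- linear map `M ↦ Bᵀ * M * B` -/
def conjLM (B : Matrix (Fin n) (Fin n) ℝ) :
    Matrix (Fin n) (Fin n) ℝ →ₗ[ℝ] Matrix (Fin n) (Fin n) ℝ where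
  toFun M := Bᵀ * M * B
  map_add' M N := by
    show Bᵀ * (M + N) * B = Bᵀ * M * B + Bᵀ * N * B
    noncomm_ring
  map_smul' c M := by
    show Bᵀ * (c • M) * B = c • (Bᵀ * M * B)
    rw [Matrix.mul_smul, Matrix.smul_mul]

lemma aux1 (B C P : Matrix (Fin n) (Fin n) ℝ) :
    Cᵀ * (Bᵀ * P * B) * C = (B * C)ᵀ * P * (B * C) := by
  rw [Matrix.transpose_mul]
  noncomm_ring

lemma aux2 (C X Y : Matrix (Fin n) (Fin n) ℝ) :
    Cᵀ * (X - Y) * C = Cᵀ * X * C - Cᵀ * Y * C := by noncomm_ring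

lemma aux4 (C : Matrix (Fin n) (Fin n) ℝ) :
    Cᵀ * (Cᵀ * C) * C = (C * C)ᵀ * (C * C) := by
  rw [Matrix.transpose_mul]
  noncomm_ring

lemma lyap_algebra (A P : Matrix (Fin n) (Fin n) ℝ) :
    (A + 1)ᵀ * P * (A + 1) - (A - 1)ᵀ * P * (A - 1)
      = (P * A + Aᵀ * P) + (P * A + Aᵀ * P) := by
  simp only [Matrix.transpose_add, Matrix.transpose_sub, Matrix.transpose_one]
  noncomm_ring

lemma lyapunov_of_hurwitz (A : Matrix (Fin n) (Fin n) ℝ)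
    (H : ∀ μ ∈ spectrum ℂ (A.map Complex.ofReal), μ.re < 0) :
    ∃ P : Matrix (Fin n) (Fin n) ℝ, P.PosDef ∧
      ∀ x : Fin n → ℝ, x ≠ 0 → x ⬝ᵥ (P * A + Aᵀ * P).mulVec x < 0 := by
  classical
  have hdet : (A - 1).det ≠ 0 := det_sub_one_ne_zero A H
  have hdetU : IsUnit (A - 1).det := isUnit_iff_ne_zero.mpr hdet
  set C : Matrix (Fin n) (Fin n) ℝ := A - 1 with hC
  set B : Matrix (Fin n) (Fin n) ℝ := (A + 1) * C⁻¹ with hB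
  obtain ⟨r, hr0, hr1, N, hN⟩ := pow_norm_geom B (cayley_spectrum_bound A H)
  set G : ℕ → Matrix (Fin n) (Fin n) ℝ := fun m => C * B ^ m with hG
  set f : ℕ → Matrix (Fin n) (Fin n) ℝ := fun m => (G m)ᵀ * G m with hf
  -- summability
  have hsum : Summable f := by
    refine Summable.of_norm_bounded_eventually_nat
      (g := fun m => ((n : ℝ) * ‖C‖ ^ 2) * (r ^ 2) ^ m)
      (Summable.mul_left _ (summable_geometric_of_lt_one (by positivity) (by nlinarith))) ?_
    filter_upwards [eventually_atTop.mpr ⟨N, hN⟩] with m hm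
    have hGm : ‖G m‖ ≤ ‖C‖ * r ^ m := by
      calc ‖G m‖ ≤ ‖C‖ * ‖B ^ m‖ := norm_mul_le _ _
        _ ≤ ‖C‖ * r ^ m := by
            have := norm_nonneg C
            nlinarith [hm]
    calc ‖f m‖ ≤ ‖(G m)ᵀ‖ * ‖G m‖ := norm_mul_le _ _
      _ ≤ ((n : ℝ) * ‖G m‖) * ‖G m‖ := by
          have := norm_nonneg (G m)
          nlinarith [linfty_norm_transpose_le (G m)]
      _ ≤ ((n : ℝ) * ‖C‖ ^ 2) * (r ^ 2) ^ m := by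
          have h1 := norm_nonneg (G m)
          have h2 : (0:ℝ) ≤ ‖C‖ * r ^ m := by positivity
          have h3 : (0:ℝ) ≤ (n:ℝ) := by positivity
          have h5 : ‖G m‖ * ‖G m‖ ≤ (‖C‖ * r ^ m) * (‖C‖ * r ^ m) :=
            mul_le_mul hGm hGm h1 h2
          calc ((n : ℝ) * ‖G m‖) * ‖G m‖ = (n:ℝ) * (‖G m‖ * ‖G m‖) := by ring
            _ ≤ (n:ℝ) * ((‖C‖ * r ^ m) * (‖C‖ * r ^ m)) := mul_le_mul_of_nonneg_left h5 h3
            _ = ((n : ℝ) * ‖C‖ ^ 2) * (r ^ 2) ^ m := by ring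
  set P : Matrix (Fin n) (Fin n) ℝ := ∑' m, f m with hP
  -- each f m is symmetric
  have hfsymm : ∀ m, (f m)ᵀ = f m := by
    intro m
    rw [hf]
    simp [Matrix.transpose_mul, Matrix.transpose_transpose, Matrix.mul_assoc]
  have hPsymm : Pᵀ = P := by
    rw [hP, Matrix.transpose_tsum]
    exact tsum_congr fun m => hfsymm m
  -- quadratic forms
  have hGram : ∀ (M : Matrix (Fin n) (Fin n) ℝ) (x : Fin n → ℝ),
      x ⬝ᵥ (Mᵀ * M) *ᵥ x = (M *ᵥ x) ⬝ᵥ (M *ᵥ x) := by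
    intro M x
    rw [← Matrix.mulVec_mulVec, Matrix.dotProduct_mulVec, Matrix.vecMul_transpose]
  have hquad_f : ∀ (x : Fin n → ℝ) m, x ⬝ᵥ (f m) *ᵥ x = (G m *ᵥ x) ⬝ᵥ (G m *ᵥ x) := by
    intro x m
    rw [hf]
    exact hGram (G m) x
  have hquad_P : ∀ x : Fin n → ℝ, x ⬝ᵥ P *ᵥ x = ∑' m, x ⬝ᵥ (f m) *ᵥ x := by
    intro x
    have h1 := ContinuousLinearMap.map_tsum
      (LinearMap.toContinuousLinearMap (quadLM (n := n) x)) hsum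
    simp only [LinearMap.coe_toContinuousLinearMap', quadLM, LinearMap.coe_mk,
      AddHom.coe_mk] at h1
    exact h1
  have hsumx : ∀ x : Fin n → ℝ, Summable fun m => x ⬝ᵥ (f m) *ᵥ x := by
    intro x
    have h1 := hsum.map (quadLM (n := n) x).toAddMonoidHom
      (quadLM (n := n) x).continuous_of_finiteDimensional
    simpa only [Function.comp_def, LinearMap.toAddMonoidHom_coe, quadLM, LinearMap.coe_mk,
      AddHom.coe_mk] using h1
  -- nonnegativity helpers
  have hsq : ∀ v : Fin n → ℝ, 0 ≤ v ⬝ᵥ v := fun v =>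
    Finset.sum_nonneg fun i _ => mul_self_nonneg _
  have hsqpos : ∀ v : Fin n → ℝ, v ≠ 0 → 0 < v ⬝ᵥ v := fun v hv =>
    (hsq v).lt_of_ne fun h => hv (dotProduct_self_eq_zero.mp h.symm)
  have hCx : ∀ x : Fin n → ℝ, x ≠ 0 → C *ᵥ x ≠ 0 := by
    intro x hx h
    apply hx
    have : C⁻¹ *ᵥ (C *ᵥ x) = x := by
      rw [Matrix.mulVec_mulVec, Matrix.nonsing_inv_mul C hdetU, Matrix.one_mulVec]
    rw [h, Matrix.mulVec_zero] at this
    exact this.symm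
  have hGzero : G 0 = C := by rw [hG]; simp
  -- P is positive definite
  have hPposdef : P.PosDef := by
    refine Matrix.PosDef.of_dotProduct_mulVec_pos ?_ ?_
    · rw [Matrix.IsHermitian, Matrix.conjTranspose_eq_transpose_of_trivial]
      exact hPsymm
    · intro x hx
      have hstar : star x = x := by
        funext i
        simp
      rw [hstar]
      show 0 < x ⬝ᵥ P *ᵥ x
      rw [hquad_P x]
      refine Summable.tsum_pos (hsumx x) (fun m => ?_) 0 ?_
      · rw [hquad_f]
        exact hsq _
      · rw [hquad_f, hGzero]
        exact hsqpos _ (hCx x hx)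
  -- Lyapunov identity
  have hBC : B * C = A + 1 := by
    rw [hB, Matrix.mul_assoc, Matrix.nonsing_inv_mul C hdetU, Matrix.mul_one]
  have hstep : ∀ m, Bᵀ * f m * B = f (m + 1) := by
    intro m
    rw [hf]
    simp only [hG, pow_succ, Matrix.transpose_mul, Matrix.mul_assoc]
  have hconj : Bᵀ * P * B = P - Cᵀ * C := by
    have h2 := ContinuousLinearMap.map_tsum
      (LinearMap.toContinuousLinearMap (conjLM (n := n) B)) hsum
    have h3 : Bᵀ * P * B = ∑' m, f (m + 1) := by
      have h2' : Bᵀ * (∑' m, f m) * B = ∑' m, Bᵀ * f m * B := by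
        simpa only [LinearMap.coe_toContinuousLinearMap', conjLM, LinearMap.coe_mk,
          AddHom.coe_mk] using h2
      rw [hP, h2']
      exact tsum_congr hstep
    have h4 : (∑' m, f m) = f 0 + ∑' m, f (m + 1) := hsum.tsum_eq_zero_add
    have h5 : f 0 = Cᵀ * C := by
      show (G 0)ᵀ * G 0 = Cᵀ * C
      rw [hGzero]
    rw [h3, hP]
    rw [h4, h5]
    abel
  -- the algebraic identity
  have hmain : (P * A + Aᵀ * P) + (P * A + Aᵀ * P) = -((C * C)ᵀ * (C * C)) := by
    have e1 : Cᵀ * (Bᵀ * P * B) * C = (A + 1)ᵀ * P * (A + 1) := by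
      rw [aux1, hBC]
    have e2 : Cᵀ * (Bᵀ * P * B) * C = Cᵀ * P * C - Cᵀ * (Cᵀ * C) * C := by
      rw [hconj, aux2]
    have e3 : (A + 1)ᵀ * P * (A + 1) - Cᵀ * P * C = -(Cᵀ * (Cᵀ * C) * C) := by
      rw [← e1, e2]
      abel
    have e4 := lyap_algebra A P
    rw [← hC] at e4
    rw [← e4, e3, aux4]
  -- conclusion
  refine ⟨P, hPposdef, fun x hx => ?_⟩
  have hDx : (C * C) *ᵥ x ≠ 0 := by
    rw [← Matrix.mulVec_mulVec]
    exact hCx _ (hCx x hx)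
  have hqpos : 0 < x ⬝ᵥ ((C * C)ᵀ * (C * C)) *ᵥ x := by
    rw [hGram]
    exact hsqpos _ hDx
  have hsum2 : x ⬝ᵥ ((P * A + Aᵀ * P) + (P * A + Aᵀ * P)) *ᵥ x
      = x ⬝ᵥ (P * A + Aᵀ * P) *ᵥ x + x ⬝ᵥ (P * A + Aᵀ * P) *ᵥ x := by
    rw [Matrix.add_mulVec, dotProduct_add]
  have hneg : x ⬝ᵥ (-((C * C)ᵀ * (C * C))) *ᵥ x = -(x ⬝ᵥ ((C * C)ᵀ * (C * C)) *ᵥ x) := by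
    rw [Matrix.neg_mulVec, dotProduct_neg]
  have := congrArg (fun M => x ⬝ᵥ M *ᵥ x) hmain
  rw [hsum2, hneg] at this
  show x ⬝ᵥ (P * A + Aᵀ * P) *ᵥ x < 0
  linarith

end LyapunovAux

/-- Lyapunov characterization of Hurwitz matrices. -/
theorem lyapunov_iff_hurwitz {n : ℕ} (A : Matrix (Fin n) (Fin n) ℝ) :
    (∃ P : Matrix (Fin n) (Fin n) ℝ, P.PosDef ∧
      ∀ x : Fin n → ℝ, x ≠ 0 → x ⬝ᵥ (P * A + Aᵀ * P).mulVec x < 0) ↔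
    (∀ μ ∈ spectrum ℂ (A.map (Complex.ofReal)), μ.re < 0) := by
  constructor
  · rintro ⟨P, hP, hneg⟩ μ hμ
    exact hurwitz_of_lyapunov A P hP hneg μ hμ
  · exact lyapunov_of_hurwitz A
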